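/- With P, Q, and 𝒥 as above, and assuming X is T₁: the maximal elements of the ideal completion Idl(Q) (ordered by inclusion) are exactly the sets 𝒥(x) for x ∈ X, i.e., Max(Idl(Q)) = {𝒥(x) : x ∈ X}. -/

import Mathlib

/-- A subset is Scott open: an upper set inaccessible by directed suprema. -/
def ScottOpen {α : Type*} [Preorder α] (U : Set α) : Prop :=
  IsUpperSet U ∧ ∀ d : Set α, d.Nonempty → DirectedOn (· ≤ ·) d →
    ∀ a : α, IsLUB d a → a ∈ U → (d ∩ U).Nonempty

/-- A subset is Scott closed: a lower set closed under directed suprema. -/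
def ScottClosed {α : Type*} [Preorder α] (C : Set α) : Prop :=
  IsLowerSet C ∧ ∀ d : Set α, d ⊆ C → d.Nonempty → DirectedOn (· ≤ ·) d →
    ∀ a : α, IsLUB d a → a ∈ C

/-- A dcpo: every nonempty directed subset has a supremum. -/
def IsDcpo (α : Type*) [Preorder α] : Prop :=
  ∀ d : Set α, d.Nonempty → DirectedOn (· ≤ ·) d → ∃ a, IsLUB d a

/-- The way-below relation. -/
def WayBelow {α : Type*} [Preorder α] (x y : α) : Prop :=
  ∀ d : Set α, d.Nonempty → DirectedOn (· ≤ ·) d → ∀ a : α, IsLUB d a → y ≤ a →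
    ∃ z ∈ d, x ≤ z

/-- A compact element: one that is way-below itself. -/
def IsCompactElt {α : Type*} [Preorder α] (x : α) : Prop := WayBelow x x

/-- A continuous dcpo (domain). -/
def IsContinuousDcpo (α : Type*) [Preorder α] : Prop :=
  IsDcpo α ∧ ∀ x : α, DirectedOn (· ≤ ·) {y | WayBelow y x} ∧ IsLUB {y | WayBelow y x} x

/-- An algebraic dcpo (algebraic domain). -/
def IsAlgebraicDcpo (α : Type*) [Preorder α] : Prop :=
  IsDcpo α ∧ ∀ x : α, DirectedOn (· ≤ ·) {k | IsCompactElt k ∧ k ≤ x} ∧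
    IsLUB {k | IsCompactElt k ∧ k ≤ x} x

/-- An ideal domain: a continuous dcpo in which every element is compact or maximal. -/
def IsIdealDomain (α : Type*) [Preorder α] : Prop :=
  IsContinuousDcpo α ∧ ∀ x : α, IsCompactElt x ∨ IsMax x

/-- The Scott topology on a preorder. -/
def scottTop (α : Type*) [Preorder α] : TopologicalSpace α where
  IsOpen := ScottOpen
  isOpen_univ := ⟨isUpperSet_univ, fun d hd _ _ _ _ => hd.imp fun x hx => ⟨hx, trivial⟩⟩
  isOpen_inter U V hU hV := by
    refine ⟨hU.1.inter hV.1, fun d hne hdir a ha haUV => ?_⟩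
    obtain ⟨u, hud, huU⟩ := hU.2 d hne hdir a ha haUV.1
    obtain ⟨v, hvd, hvV⟩ := hV.2 d hne hdir a ha haUV.2
    obtain ⟨w, hwd, hw1, hw2⟩ := hdir u hud v hvd
    exact ⟨w, hwd, hU.1 hw1 huU, hV.1 hw2 hvV⟩
  isOpen_sUnion S hS := by
    constructor
    · rintro a b hab ⟨U, hUS, haU⟩
      exact ⟨U, hUS, (hS U hUS).1 hab haU⟩
    · rintro d hne hdir a ha ⟨U, hUS, haU⟩
      obtain ⟨u, hud, huU⟩ := (hS U hUS).2 d hne hdir a ha haU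
      exact ⟨u, hud, U, hUS, huU⟩

/-- The maximal point space of a preorder. -/
abbrev MaxSpace (α : Type*) [Preorder α] := {x : α // IsMax x}

/-- The maximal point space carries the relative Scott topology. -/
instance maxSpaceTop (α : Type*) [Preorder α] : TopologicalSpace (MaxSpace α) :=
  TopologicalSpace.induced Subtype.val (scottTop α)

section ProductConstruction

variable {P X Y : Type*} [PartialOrder P] [TopologicalSpace X] [TopologicalSpace Y]

/-- The poset `Q` of triples `(U,V,k)` with `U` a nonempty open subset of `X`, `V` an open
neighborhood of `y₀`, `k` a compact element of `P`, and `U × V ⊆ ↑k ∩ Max(P)` (via the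
identification `e : Max(P) ≅ X × Y`). -/
def QSet (e : MaxSpace P ≃ₜ X × Y) (y₀ : Y) : Set (Set X × Set Y × P) :=
  {t | IsOpen t.1 ∧ t.1.Nonempty ∧ IsOpen t.2.1 ∧ y₀ ∈ t.2.1 ∧ IsCompactElt t.2.2 ∧
    ∀ m : MaxSpace P, (e m).1 ∈ t.1 → (e m).2 ∈ t.2.1 → t.2.2 ≤ m.val}

/-- The relation `⊑` on `Q`: `(U₁,V₁,k₁) ⊑ (U₂,V₂,k₂)` iff `k₁ ≤ k₂` and
`↑k₂ ∩ Max(P) ⊆ U₁ × V₁`. -/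
def QRel (e : MaxSpace P ≃ₜ X × Y) (y₀ : Y) (t₁ t₂ : QSet e y₀) : Prop :=
  t₁.val.2.2 ≤ t₂.val.2.2 ∧
    ∀ m : MaxSpace P, t₂.val.2.2 ≤ m.val → (e m).1 ∈ t₁.val.1 ∧ (e m).2 ∈ t₁.val.2.1

/-- `𝒥(x) = {(U,V,k) ∈ Q : x ∈ U}`. -/
def JSet (e : MaxSpace P ≃ₜ X × Y) (y₀ : Y) (x : X) : Set (QSet e y₀) :=
  {t | x ∈ t.val.1}

end ProductConstruction

/-- An ideal with respect to a relation `r`: a nonempty, `r`-directed, `r`-lower set. -/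
def IsIdealRel {β : Type*} (r : β → β → Prop) (I : Set β) : Prop :=
  I.Nonempty ∧ (∀ a ∈ I, ∀ b ∈ I, ∃ c ∈ I, r a c ∧ r b c) ∧
    ∀ a b : β, r a b → b ∈ I → a ∈ I

/-- The ideal completion `Idl` of `(β, r)`, ordered by set inclusion. -/
abbrev IdlRel {β : Type*} (r : β → β → Prop) := {I : Set β // IsIdealRel r I}

/-! The compact parts of an ideal of `Q` form a directed set; a maximal point `e⁻¹(x, y)` above
its supremum has `x` in the first component of every member, so every ideal lies in some
`𝒥(x)`. Conversely each `𝒥(x)` is an ideal: since `P` is algebraic, compact elements below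
`e⁻¹(x, y₀)` reach into every Scott-open neighbourhood of it, and the product topology then
provides a box `U × V` inside `↑k ∩ Max(P)`. Finally `𝒥(x) ⊆ 𝒥(x')` forces `x = x'`, because in
a T₁ space `x` has a neighbourhood avoiding `x'`, and some member of `𝒥(x)` has its whole upper
set inside it. -/

section Domain

variable {P : Type*} [Preorder P]

lemma IsDcpo.exists_le_isMax (hP : IsDcpo P) (p : P) : ∃ m, p ≤ m ∧ IsMax m := by
  refine zorn_le_nonempty_Ici₀ p (fun c _ hchain y hy => ?_) p le_rfl
  obtain ⟨a, ha⟩ := hP c ⟨y, hy⟩ hchain.directedOn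
  exact ⟨a, fun z hz => ha.1 hz⟩

lemma IsAlgebraicDcpo.exists_isCompactElt_le (hP : IsAlgebraicDcpo P) (p : P) :
    ∃ k, IsCompactElt k ∧ k ≤ p := by
  by_contra! h
  -- otherwise `p` is the supremum of the empty set, i.e. a least element, hence compact
  have hp_least : ∀ w, p ≤ w := fun w => (hP.2 p).2.2 fun k hk => (h k hk.1 hk.2).elim
  exact h p (fun d hne _ _ _ _ => hne.imp fun w hw => ⟨hw, hp_least w⟩) le_rfl

lemma scottOpen_Ici {k : P} (hk : IsCompactElt k) : ScottOpen (Set.Ici k) :=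
  ⟨isUpperSet_Ici k, hk⟩

lemma IsAlgebraicDcpo.exists_isCompactElt_mem_of_scottOpen (hP : IsAlgebraicDcpo P)
    {S : Set P} (hS : ScottOpen S) {p k₀ : P} (hp : p ∈ S) (hk₀ : IsCompactElt k₀)
    (hk₀p : k₀ ≤ p) : ∃ k, IsCompactElt k ∧ k₀ ≤ k ∧ k ≤ p ∧ k ∈ S := by
  obtain ⟨hdir, hlub⟩ := hP.2 p
  obtain ⟨k₁, ⟨hk₁, hk₁p⟩, hk₁S⟩ :=
    hS.2 _ (hP.exists_isCompactElt_le p) hdir p hlub hp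
  obtain ⟨k, ⟨hk, hkp⟩, hk₁k, hk₀k⟩ := hdir k₁ ⟨hk₁, hk₁p⟩ k₀ ⟨hk₀, hk₀p⟩
  exact ⟨k, hk, hk₀k, hkp, hS.1 hk₁k hk₁S⟩

lemma isOpen_maxSpace_iff {s : Set (MaxSpace P)} :
    IsOpen s ↔ ∃ S : Set P, ScottOpen S ∧ Subtype.val ⁻¹' S = s :=
  @isOpen_induced_iff _ _ (scottTop P) _ _

lemma isOpen_setOf_le_val {k : P} (hk : IsCompactElt k) :
    IsOpen {m : MaxSpace P | k ≤ m.val} :=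
  isOpen_maxSpace_iff.mpr ⟨Set.Ici k, scottOpen_Ici hk, rfl⟩

lemma IsAlgebraicDcpo.exists_isCompactElt_setOf_le_subset (hP : IsAlgebraicDcpo P)
    {W : Set (MaxSpace P)} (hW : IsOpen W) {n : MaxSpace P} (hn : n ∈ W) {k₀ : P}
    (hk₀ : IsCompactElt k₀) (hk₀n : k₀ ≤ n.val) :
    ∃ k, IsCompactElt k ∧ k₀ ≤ k ∧ k ≤ n.val ∧ {m : MaxSpace P | k ≤ m.val} ⊆ W := by
  obtain ⟨S, hS, rfl⟩ := isOpen_maxSpace_iff.mp hW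
  obtain ⟨k, hk, hk₀k, hkn, hkS⟩ := hP.exists_isCompactElt_mem_of_scottOpen hS hn hk₀ hk₀n
  exact ⟨k, hk, hk₀k, hkn, fun m hm => hS.1 hm hkS⟩

end Domain

section ProductConstruction

variable {P X Y : Type*} [PartialOrder P] [TopologicalSpace X] [TopologicalSpace Y]
  {e : MaxSpace P ≃ₜ X × Y} {y₀ : Y}

lemma le_symm_of_mem_JSet {x : X} {t : QSet e y₀} (ht : t ∈ JSet e y₀ x) :
    t.val.2.2 ≤ (e.symm (x, y₀)).val :=
  t.2.2.2.2.2.2 _ (by rw [e.apply_symm_apply]; exact ht)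
    (by rw [e.apply_symm_apply]; exact t.2.2.2.2.1)

lemma exists_mem_JSet_setOf_le_subset (hP : IsAlgebraicDcpo P) {x : X} {O : Set (X × Y)}
    (hO : IsOpen O) (hxO : (x, y₀) ∈ O) {k₀ : P} (hk₀ : IsCompactElt k₀)
    (hk₀x : k₀ ≤ (e.symm (x, y₀)).val) :
    ∃ t ∈ JSet e y₀ x, k₀ ≤ t.val.2.2 ∧ ∀ m : MaxSpace P, t.val.2.2 ≤ m.val → e m ∈ O := by
  obtain ⟨k, hk, hk₀k, hkx, hkO⟩ := hP.exists_isCompactElt_setOf_le_subset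
    (hO.preimage e.continuous) (by simpa using hxO) hk₀ hk₀x
  have hbox : (x, y₀) ∈ e '' {m : MaxSpace P | k ≤ m.val} := ⟨_, hkx, e.apply_symm_apply _⟩
  obtain ⟨U, V, hU, hV, hxU, hyV, hUV⟩ :=
    isOpen_prod_iff.mp (e.isOpenMap _ (isOpen_setOf_le_val hk)) x y₀ hbox
  have hUVk : ∀ m : MaxSpace P, (e m).1 ∈ U → (e m).2 ∈ V → k ≤ m.val := by
    intro m hmU hmV
    obtain ⟨m', hm', hem'⟩ := hUV (Set.mk_mem_prod hmU hmV)
    rwa [e.injective hem'] at hm'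
  exact ⟨⟨(U, V, k), hU, ⟨x, hxU⟩, hV, hyV, hk, hUVk⟩, hxU, hk₀k, fun m hm => hkO hm⟩

lemma isIdealRel_JSet (hP : IsAlgebraicDcpo P) (x : X) :
    IsIdealRel (QRel e y₀) (JSet e y₀ x) := by
  refine ⟨?nonempty, ?directed, ?lower⟩
  case nonempty =>
    obtain ⟨k₀, hk₀, hk₀x⟩ := hP.exists_isCompactElt_le (e.symm (x, y₀)).val
    obtain ⟨t, ht, -⟩ := exists_mem_JSet_setOf_le_subset hP isOpen_univ trivial hk₀ hk₀x
    exact ⟨t, ht⟩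
  case directed =>
    intro a ha b hb
    obtain ⟨k₀, ⟨hk₀, hk₀x⟩, hak₀, hbk₀⟩ := (hP.2 _).1 _
      ⟨a.2.2.2.2.2.1, le_symm_of_mem_JSet ha⟩ _ ⟨b.2.2.2.2.2.1, le_symm_of_mem_JSet hb⟩
    obtain ⟨c, hc, hk₀c, hcO⟩ := exists_mem_JSet_setOf_le_subset hP
      ((a.2.1.inter b.2.1).prod (a.2.2.2.1.inter b.2.2.2.1))
      ⟨⟨ha, hb⟩, a.2.2.2.2.1, b.2.2.2.2.1⟩ hk₀ hk₀x
    exact ⟨c, hc, ⟨hak₀.trans hk₀c, fun m hm => ⟨(hcO m hm).1.1, (hcO m hm).2.1⟩⟩,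
      ⟨hbk₀.trans hk₀c, fun m hm => ⟨(hcO m hm).1.2, (hcO m hm).2.2⟩⟩⟩
  case lower =>
    intro a b hab hb
    simpa [JSet] using (hab.2 _ (le_symm_of_mem_JSet hb)).1

lemma exists_subset_JSet (hP : IsDcpo P) {I : Set (QSet e y₀)}
    (hI : IsIdealRel (QRel e y₀) I) : ∃ x, I ⊆ JSet e y₀ x := by
  obtain ⟨p, hp⟩ := hP ((fun t : QSet e y₀ => t.val.2.2) '' I) (hI.1.image _) <| by
    rintro _ ⟨a, ha, rfl⟩ _ ⟨b, hb, rfl⟩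
    obtain ⟨c, hc, hac, hbc⟩ := hI.2.1 a ha b hb
    exact ⟨_, ⟨c, hc, rfl⟩, hac.1, hbc.1⟩
  obtain ⟨m, hpm, hm⟩ := hP.exists_le_isMax p
  -- each member `t` of `I` lies below some `c ∈ I`, so `↑c.k ∋ m` lands in `U_t × V_t`
  refine ⟨(e ⟨m, hm⟩).1, fun t ht => ?_⟩
  obtain ⟨c, hc, htc, -⟩ := hI.2.1 t ht t ht
  exact (htc.2 ⟨m, hm⟩ ((hp.1 ⟨c, hc, rfl⟩).trans hpm)).1

lemma eq_of_JSet_subset [T1Space X] (hP : IsAlgebraicDcpo P) {x x' : X}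
    (h : JSet e y₀ x ⊆ JSet e y₀ x') : x = x' := by
  by_contra hne
  obtain ⟨k₀, hk₀, hk₀x⟩ := hP.exists_isCompactElt_le (e.symm (x, y₀)).val
  obtain ⟨t, ht, -, htO⟩ := exists_mem_JSet_setOf_le_subset hP
    (isOpen_compl_singleton.prod isOpen_univ) (show (x, y₀) ∈ {x'}ᶜ ×ˢ Set.univ from ⟨hne, trivial⟩)
    hk₀ hk₀x
  have := htO _ (le_symm_of_mem_JSet (h ht))
  simp at this

end ProductConstruction

/-- For `X` a T₁ space, the maximal elements of the ideal completion
`Idl(Q)` (ordered by inclusion) are exactly the sets `𝒥(x)` for `x ∈ X`. -/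
theorem max_idl_eq_J {P X Y : Type*} [PartialOrder P]
    [TopologicalSpace X] [TopologicalSpace Y] [T1Space X] (hP : IsAlgebraicDcpo P)
    (e : MaxSpace P ≃ₜ X × Y) (y₀ : Y) :
    {I : IdlRel (QRel e y₀) | IsMax I} =
      {I : IdlRel (QRel e y₀) | ∃ x : X, I.val = JSet e y₀ x} := by
  ext I
  constructor
  · intro hmax
    obtain ⟨x, hIx⟩ := exists_subset_JSet hP.1 I.2
    exact ⟨x, hIx.antisymm (hmax (show I ≤ ⟨_, isIdealRel_JSet hP x⟩ from hIx))⟩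
  · rintro ⟨x, hIx⟩ I' hII'
    obtain ⟨x', hI'x'⟩ := exists_subset_JSet hP.1 I'.2
    have hJ : JSet e y₀ x ⊆ JSet e y₀ x' := hIx ▸ fun t ht => hI'x' (hII' ht)
    obtain rfl := eq_of_JSet_subset hP hJ
    exact fun t ht => hIx ▸ hI'x' ht
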